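/- arXiv:1806.03430 — 2 statements merged into one kernel-verified Lean document; each statement's English description precedes it below -/
import Mathlib

section
/- For any matrix L ∈ ℝ^{m×n} with rank(L) ≤ r, the nuclear norm admits the variational characterization ‖L‖_* = inf{(1/2)‖U‖_F² + (1/2)‖V‖_F² : U ∈ ℝ^{m×r}, V ∈ ℝ^{n×r}, UV^⊤ = L}, and the infimum is attained. -/
/-!
Diagonalise `Lᵀ L = B diag(σ²) Bᵀ` with `B` orthogonal and put `C = L B diag(σ)⁺`; then
`L = C diag(σ) Bᵀ`, `C` is a partial isometry and `‖L‖_* = tr (Cᵀ L B)`. For any factorisation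
`L = U Vᵀ` this gives `‖L‖_* = ⟨Uᵀ C, Vᵀ B⟩_F ≤ ½‖Uᵀ C‖_F² + ½‖Vᵀ B‖_F² ≤ ½‖U‖_F² + ½‖V‖_F²`
by AM–GM and Bessel's inequality. Conversely `diag(σ)` has `rank L ≤ r` nonzero entries, so it
is `S Sᵀ` for some `n × r` matrix `S`, and `U = C S`, `V = B S` attain the bound.
-/

open Matrix

/-- The nuclear norm of a real matrix: the sum of its singular values, i.e. the sum of the
square roots of the eigenvalues of `Aᴴ * A`. -/
noncomputable def nuclearNorm {m n : ℕ} (A : Matrix (Fin m) (Fin n) ℝ) : ℝ :=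
  ∑ i, Real.sqrt ((Matrix.isHermitian_conjTranspose_mul_self A).eigenvalues i)

noncomputable def frobSq {m n : ℕ} (A : Matrix (Fin m) (Fin n) ℝ) : ℝ := ∑ i, ∑ j, (A i j)^2

namespace Matrix

variable {ι κ ρ : Type*} [Fintype ι] [Fintype κ] [Fintype ρ]

theorem trace_transpose_mul_le (X Y : Matrix κ ι ℝ) :
    trace (Xᵀ * Y) ≤ 1 / 2 * trace (Xᵀ * X) + 1 / 2 * trace (Yᵀ * Y) := by
  have h := (posSemidef_conjTranspose_mul_self (X - Y)).trace_nonneg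
  rw [conjTranspose_eq_transpose_of_trivial, transpose_sub, Matrix.sub_mul, Matrix.mul_sub,
    Matrix.mul_sub, trace_sub, trace_sub, trace_sub, ← trace_transpose (Yᵀ * X), transpose_mul,
    transpose_transpose] at h
  linarith

theorem trace_transpose_mul_self_mul (A : Matrix κ ι ℝ) (S : Matrix ι ρ ℝ) :
    trace ((A * S)ᵀ * (A * S)) = trace (Aᵀ * A * (S * Sᵀ)) := by
  rw [transpose_mul, Matrix.mul_assoc, trace_mul_comm, Matrix.mul_assoc, Matrix.mul_assoc,
    Matrix.mul_assoc]

theorem trace_mul_transpose_mul_self_le [DecidableEq κ] (U : Matrix κ ρ ℝ)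
    {C : Matrix κ ι ℝ} (hC : C * Cᵀ * C = C) :
    trace (U * Uᵀ * (C * Cᵀ)) ≤ trace (Uᵀ * U) := by
  set Q : Matrix κ κ ℝ := 1 - C * Cᵀ
  have hQ : Q * Qᵀ = Q := by
    simp only [Q, transpose_sub, transpose_one, transpose_mul, transpose_transpose, sub_mul,
      mul_sub, Matrix.one_mul, Matrix.mul_one, ← Matrix.mul_assoc, hC]
    abel
  have h := (posSemidef_conjTranspose_mul_self (Qᵀ * U)).trace_nonneg
  rw [conjTranspose_eq_transpose_of_trivial, trace_transpose_mul_self_mul, transpose_transpose,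
    hQ, trace_mul_comm, Matrix.mul_assoc] at h
  simp only [Q, Matrix.mul_sub, Matrix.mul_one, trace_sub] at h
  rw [trace_mul_comm Uᵀ, Matrix.mul_assoc]
  linarith

theorem mul_diagonal_eq_self_of_transpose_mul_self_eq_diagonal [DecidableEq ι]
    {X : Matrix κ ι ℝ} {d e : ι → ℝ} (hX : Xᵀ * X = diagonal d) (he : ∀ i, d i ≠ 0 → e i = 1) :
    X * diagonal e = X := by
  ext k i
  rw [mul_diagonal]
  by_cases hd : d i = 0
  · have hcol : ∑ k, X k i ^ 2 = 0 := by
      simpa [mul_apply, hd, sq] using congrFun (congrFun hX i) i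
    have := (Finset.sum_eq_zero_iff_of_nonneg (fun k _ => sq_nonneg (X k i))).mp hcol k
      (Finset.mem_univ k)
    simp [pow_eq_zero_iff two_ne_zero |>.mp this]
  · rw [he i hd, mul_one]

theorem exists_mul_transpose_eq_diagonal [DecidableEq ι] {r : ℕ} {d : ι → ℝ}
    (hd : ∀ i, 0 ≤ d i) (hcard : Fintype.card {i // d i ≠ 0} ≤ r) :
    ∃ S : Matrix ι (Fin r) ℝ, S * Sᵀ = diagonal d := by
  obtain ⟨f⟩ := Function.Embedding.nonempty_of_card_le (hcard.trans (Fintype.card_fin r).ge)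
  refine ⟨of fun i j => if h : d i = 0 then 0 else if f ⟨i, h⟩ = j then √(d i) else 0, ?_⟩
  ext i k
  by_cases hi : d i = 0
  · by_cases hik : i = k
    · subst hik; simp [mul_apply, hi]
    · simp [mul_apply, hi, hik]
  by_cases hk : d k = 0
  · have hik : i ≠ k := by rintro rfl; exact hi hk
    simp [mul_apply, hk, hik]
  simp only [mul_apply, transpose_apply, of_apply, dif_neg hi, dif_neg hk, ite_mul, zero_mul,
    mul_ite, mul_zero, Finset.sum_ite_eq, Finset.mem_univ, if_true, diagonal_apply,
    f.injective.eq_iff, Subtype.mk.injEq]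
  split_ifs with hik
  · subst hik; exact Real.mul_self_sqrt (hd i)
  · rfl

variable {m n : ℕ} (L : Matrix (Fin m) (Fin n) ℝ)

noncomputable def rightSingularMatrix : Matrix (Fin n) (Fin n) ℝ :=
  (isHermitian_conjTranspose_mul_self L).eigenvectorUnitary

noncomputable def singularValues (i : Fin n) : ℝ :=
  √((isHermitian_conjTranspose_mul_self L).eigenvalues i)

-- `0⁻¹ = 0` makes `diagonal L.singularValues⁻¹` the pseudo-inverse of `diagonal L.singularValues`.
noncomputable def leftSingularMatrix : Matrix (Fin m) (Fin n) ℝ :=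
  L * L.rightSingularMatrix * diagonal L.singularValues⁻¹

theorem rightSingularMatrix_mul_transpose :
    L.rightSingularMatrix * L.rightSingularMatrixᵀ = 1 := by
  rw [← conjTranspose_eq_transpose_of_trivial, ← star_eq_conjTranspose]
  exact Unitary.coe_mul_star_self _

theorem rightSingularMatrix_transpose_mul :
    L.rightSingularMatrixᵀ * L.rightSingularMatrix = 1 := by
  rw [← conjTranspose_eq_transpose_of_trivial, ← star_eq_conjTranspose]
  exact Unitary.coe_star_mul_self _

theorem singularValues_nonneg (i : Fin n) : 0 ≤ L.singularValues i := Real.sqrt_nonneg _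

theorem nuclearNorm_eq_trace : nuclearNorm L = trace (diagonal L.singularValues) :=
  (trace_diagonal _).symm

theorem card_singularValues_ne_zero : Fintype.card {i // L.singularValues i ≠ 0} = L.rank := by
  have hL := isHermitian_conjTranspose_mul_self L
  rw [← rank_transpose_mul_self, ← conjTranspose_eq_transpose_of_trivial,
    hL.rank_eq_card_non_zero_eigs]
  refine Fintype.card_congr (Equiv.subtypeEquivRight fun i => ?_)
  rw [singularValues, ne_eq,
    Real.sqrt_eq_zero ((posSemidef_conjTranspose_mul_self L).eigenvalues_nonneg i)]

theorem transpose_mul_self_mul_rightSingularMatrix :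
    (L * L.rightSingularMatrix)ᵀ * (L * L.rightSingularMatrix) =
      diagonal fun i => L.singularValues i * L.singularValues i := by
  have hL := isHermitian_conjTranspose_mul_self L
  have h := hL.conjStarAlgAut_star_eigenvectorUnitary
  rw [Unitary.conjStarAlgAut_star_apply, star_eq_conjTranspose,
    conjTranspose_eq_transpose_of_trivial] at h
  rw [rightSingularMatrix, transpose_mul, ← conjTranspose_eq_transpose_of_trivial L,
    Matrix.mul_assoc, ← Matrix.mul_assoc _ L, ← Matrix.mul_assoc, h]
  congr 1; funext i
  exact (Real.mul_self_sqrt ((posSemidef_conjTranspose_mul_self L).eigenvalues_nonneg i)).symm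

theorem leftSingularMatrix_transpose_mul :
    L.leftSingularMatrixᵀ * (L * L.rightSingularMatrix) = diagonal L.singularValues := by
  rw [leftSingularMatrix, transpose_mul, diagonal_transpose, Matrix.mul_assoc,
    transpose_mul_self_mul_rightSingularMatrix, diagonal_mul_diagonal]
  congr 1; funext i
  simp [← mul_assoc]

theorem leftSingularMatrix_mul_diagonal :
    L.leftSingularMatrix * diagonal L.singularValues = L * L.rightSingularMatrix := by
  rw [leftSingularMatrix, Matrix.mul_assoc, diagonal_mul_diagonal]
  refine mul_diagonal_eq_self_of_transpose_mul_self_eq_diagonal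
    (transpose_mul_self_mul_rightSingularMatrix L) fun i hi => ?_
  exact inv_mul_cancel₀ (left_ne_zero_of_mul hi)

theorem leftSingularMatrix_transpose_mul_self :
    L.leftSingularMatrixᵀ * L.leftSingularMatrix =
      diagonal (L.singularValues * L.singularValues⁻¹) := by
  nth_rewrite 2 [leftSingularMatrix]
  rw [← Matrix.mul_assoc, leftSingularMatrix_transpose_mul, diagonal_mul_diagonal]
  rfl

theorem leftSingularMatrix_mul_transpose_mul_self :
    L.leftSingularMatrix * L.leftSingularMatrixᵀ * L.leftSingularMatrix =
      L.leftSingularMatrix := by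
  rw [Matrix.mul_assoc, leftSingularMatrix_transpose_mul_self]
  conv_rhs => rw [leftSingularMatrix]
  rw [leftSingularMatrix, Matrix.mul_assoc, diagonal_mul_diagonal]
  congr 2; funext i
  rcases eq_or_ne (L.singularValues i) 0 with h | h <;> simp [h]

theorem leftSingularMatrix_mul_diagonal_mul_transpose :
    L.leftSingularMatrix * diagonal L.singularValues * L.rightSingularMatrixᵀ = L := by
  rw [leftSingularMatrix_mul_diagonal, Matrix.mul_assoc, rightSingularMatrix_mul_transpose,
    Matrix.mul_one]

end Matrix

theorem frobSq_eq_trace {m n : ℕ} (M : Matrix (Fin m) (Fin n) ℝ) :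
    frobSq M = trace (Mᵀ * M) := by
  simp only [frobSq, trace, diag, mul_apply, transpose_apply, sq]
  exact Finset.sum_comm

theorem nuclearNorm_le_of_mul_transpose_eq {m n r : ℕ} {L : Matrix (Fin m) (Fin n) ℝ}
    (U : Matrix (Fin m) (Fin r) ℝ) (V : Matrix (Fin n) (Fin r) ℝ) (h : U * Vᵀ = L) :
    nuclearNorm L ≤ 1 / 2 * frobSq U + 1 / 2 * frobSq V := by
  set B := L.rightSingularMatrix
  set C := L.leftSingularMatrix
  have hUC : trace ((Uᵀ * C)ᵀ * (Uᵀ * C)) ≤ frobSq U := by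
    rw [frobSq_eq_trace, trace_transpose_mul_self_mul, transpose_transpose]
    exact trace_mul_transpose_mul_self_le U L.leftSingularMatrix_mul_transpose_mul_self
  have hVB : trace ((Vᵀ * B)ᵀ * (Vᵀ * B)) = frobSq V := by
    rw [frobSq_eq_trace, trace_transpose_mul_self_mul, transpose_transpose,
      rightSingularMatrix_mul_transpose, Matrix.mul_one, trace_mul_comm]
  calc nuclearNorm L = trace (Cᵀ * (L * B)) := by
        rw [nuclearNorm_eq_trace, leftSingularMatrix_transpose_mul]
    _ = trace ((Uᵀ * C)ᵀ * (Vᵀ * B)) := by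
        rw [← h, transpose_mul, transpose_transpose, Matrix.mul_assoc, Matrix.mul_assoc]
    _ ≤ 1 / 2 * trace ((Uᵀ * C)ᵀ * (Uᵀ * C)) + 1 / 2 * trace ((Vᵀ * B)ᵀ * (Vᵀ * B)) :=
        trace_transpose_mul_le _ _
    _ ≤ 1 / 2 * frobSq U + 1 / 2 * frobSq V := by linarith

theorem exists_mul_transpose_eq_frobSq_eq_nuclearNorm {m n r : ℕ}
    (L : Matrix (Fin m) (Fin n) ℝ) (hr : L.rank ≤ r) :
    ∃ (U : Matrix (Fin m) (Fin r) ℝ) (V : Matrix (Fin n) (Fin r) ℝ),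
      U * Vᵀ = L ∧ frobSq U = nuclearNorm L ∧ frobSq V = nuclearNorm L := by
  obtain ⟨S, hS⟩ := exists_mul_transpose_eq_diagonal L.singularValues_nonneg
    (L.card_singularValues_ne_zero.trans_le hr)
  refine ⟨L.leftSingularMatrix * S, L.rightSingularMatrix * S, ?_, ?_, ?_⟩
  · rw [transpose_mul, Matrix.mul_assoc, ← Matrix.mul_assoc S, hS, ← Matrix.mul_assoc,
      leftSingularMatrix_mul_diagonal_mul_transpose]
  · rw [frobSq_eq_trace, trace_transpose_mul_self_mul, hS, leftSingularMatrix_transpose_mul_self,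
      diagonal_mul_diagonal, nuclearNorm_eq_trace]
    congr 2; funext i
    exact mul_inv_mul_cancel _
  · rw [frobSq_eq_trace, trace_transpose_mul_self_mul, hS, rightSingularMatrix_transpose_mul,
      Matrix.one_mul, nuclearNorm_eq_trace]

/-- for `rank L ≤ r`, `‖L‖_* = min{(1/2)‖U‖_F² + (1/2)‖V‖_F² : UVᵀ = L}`,
and the infimum is attained. -/
theorem nuclearNorm_factorization {m n r : ℕ} (L : Matrix (Fin m) (Fin n) ℝ)
    (hr : L.rank ≤ r) :
    IsLeast {c : ℝ | ∃ (U : Matrix (Fin m) (Fin r) ℝ) (V : Matrix (Fin n) (Fin r) ℝ),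
        U * V.transpose = L ∧ c = (1/2) * frobSq U + (1/2) * frobSq V}
      (nuclearNorm L) := by
  obtain ⟨U, V, hUV, hU, hV⟩ := exists_mul_transpose_eq_frobSq_eq_nuclearNorm L hr
  refine ⟨⟨U, V, hUV, by rw [hU, hV]; ring⟩, ?_⟩
  rintro c ⟨U, V, hUV, rfl⟩
  exact nuclearNorm_le_of_mul_transpose_eq U V hUV
end

section
/- Sublinear rate of the proximal gradient method: let F(x) = f(x) + g(x) where f : ℝⁿ → ℝ is convex and differentiable with L-Lipschitz gradient and g : ℝⁿ → ℝ ∪ {∞} is proper closed convex, and suppose a minimizer x* of F exists. Then the iterates x^{k+1} = argmin_x g(x) + (L/2)‖x − (x^k − (1/L)∇f(x^k))‖² satisfy F(x^k) − F(x*) ≤ L‖x⁰ − x*‖²/(2k) for all k ≥ 1. -/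
/-!
Fix a comparison point `y` in the domain of `g`. Minimality of `x⁺` for the `L`-strongly convex
prox objective `g + (L/2)‖· − v‖²` gives the three-point inequality
`g x⁺ + (L/2)‖x⁺ − v‖² + (L/2)‖x⁺ − y‖² ≤ g y + (L/2)‖y − v‖²`. Adding the descent lemma
`f x⁺ ≤ f x + ⟪∇f x, x⁺ − x⟫ + (L/2)‖x⁺ − x‖²` and the gradient inequality
`f x + ⟪∇f x, y − x⟫ ≤ f y`, the terms in `∇f x` cancel and
`F x⁺ ≤ F y + (L/2)(‖x − y‖² − ‖x⁺ − y‖²)`. With `y = x` this shows that `F` decreases along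
the iterates, and summing over `k` steps telescopes to `k (F xₖ − F y) ≤ (L/2)‖x₀ − y‖²`.
-/

open Set Filter Topology
open scoped RealInnerProductSpace

section Gradient

variable {E : Type*} [NormedAddCommGroup E] [InnerProductSpace ℝ E] [CompleteSpace E]
  {f : E → ℝ} {f' : E → E}

theorem HasGradientAt.hasDerivAt_comp_add_smul {g a d : E} {t : ℝ}
    (hf : HasGradientAt f g (a + t • d)) :
    HasDerivAt (fun s : ℝ => f (a + s • d)) ⟪g, d⟫ t := by
  have hline : HasDerivAt (fun s : ℝ => a + s • d) d t := by
    simpa using ((hasDerivAt_id t).smul_const d).const_add a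
  have h := (hasGradientAt_iff_hasFDerivAt.1 hf).comp_hasDerivAt t hline
  simp only [InnerProductSpace.toDual_apply_apply] at h
  exact h

theorem ConvexOn.add_inner_gradient_le (hf : ConvexOn ℝ univ f)
    (hf' : ∀ x, HasGradientAt f (f' x) x) (a b : E) :
    f a + ⟪f' a, b - a⟫ ≤ f b := by
  have hline : ConvexOn ℝ univ (fun t : ℝ => f (a + t • (b - a))) := by
    simpa only [preimage_univ, Function.comp_def, AffineMap.lineMap_apply_module', add_comm]
      using hf.comp_affineMap (AffineMap.lineMap a b)
  have hderiv : HasDerivAt (fun t : ℝ => f (a + t • (b - a))) ⟪f' a, b - a⟫ 0 := by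
    simpa only [zero_smul, add_zero] using (hf' (a + (0 : ℝ) • (b - a))).hasDerivAt_comp_add_smul
  have hslope := hline.le_slope_of_hasDerivAt (mem_univ 0) (mem_univ 1) zero_lt_one hderiv
  simp only [slope_def_field, one_smul, add_sub_cancel, zero_smul, add_zero, sub_zero,
    div_one] at hslope
  linarith

theorem le_add_inner_gradient_add_sq {L : ℝ} (hf' : ∀ x, HasGradientAt f (f' x) x)
    (hlip : ∀ x y, ‖f' x - f' y‖ ≤ L * ‖x - y‖) (a b : E) :
    f b ≤ f a + ⟪f' a, b - a⟫ + L / 2 * ‖b - a‖ ^ 2 := by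
  set d := b - a
  set ψ : ℝ → ℝ := fun t => f (a + t • d) - t * ⟪f' a, d⟫ - L / 2 * t ^ 2 * ‖d‖ ^ 2
  have hderiv : ∀ t : ℝ, HasDerivAt ψ (⟪f' (a + t • d) - f' a, d⟫ - L * t * ‖d‖ ^ 2) t := by
    intro t
    refine ((((hf' (a + t • d)).hasDerivAt_comp_add_smul).sub ((hasDerivAt_id t).mul_const
      ⟪f' a, d⟫)).sub (((hasDerivAt_pow 2 t).const_mul (L / 2)).mul_const (‖d‖ ^ 2))).congr_deriv ?_
    rw [inner_sub_left]
    ring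
  have hanti : AntitoneOn ψ (Icc 0 1) := by
    refine antitoneOn_of_hasDerivWithinAt_nonpos (convex_Icc 0 1)
      (fun t _ => (hderiv t).continuousAt.continuousWithinAt)
      (fun t _ => (hderiv t).hasDerivWithinAt) fun t ht => ?_
    rw [interior_Icc] at ht
    have hcs := real_inner_le_norm (f' (a + t • d) - f' a) d
    have hlip_t : ‖f' (a + t • d) - f' a‖ ≤ L * (t * ‖d‖) := by
      simpa [norm_smul, abs_of_pos ht.1] using hlip (a + t • d) a
    nlinarith [norm_nonneg d]
  have h01 := hanti (left_mem_Icc.2 zero_le_one) (right_mem_Icc.2 zero_le_one) zero_le_one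
  simp only [ψ, d, one_smul, zero_smul, add_zero, add_sub_cancel, one_pow, one_mul, mul_one,
    zero_mul, sub_zero, zero_pow two_ne_zero, mul_zero] at h01
  linarith

end Gradient

section StrongConvexity

variable {E : Type*} [NormedAddCommGroup E] [InnerProductSpace ℝ E] {s : Set E}

theorem ConvexOn.add_strongConvexOn {m : ℝ} {f g : E → ℝ} (hf : ConvexOn ℝ s f)
    (hg : StrongConvexOn s m g) : StrongConvexOn s m (f + g) := by
  simpa [StrongConvexOn] using (uniformConvexOn_zero.2 hf).add hg

theorem strongConvexOn_mul_norm_sub_sq (hs : Convex ℝ s) (c : ℝ) (v : E) :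
    StrongConvexOn s (2 * c) fun z => c * ‖z - v‖ ^ 2 := by
  refine ⟨hs, fun x _ y _ a b ha hb hab => le_of_eq ?_⟩
  obtain rfl := eq_sub_of_add_eq hab
  have hcomb : (1 - b) • x + b • y - v = (1 - b) • (x - v) + b • (y - v) := by module
  dsimp only
  rw [hcomb, show x - y = (x - v) - (y - v) by abel]
  generalize x - v = u, y - v = w
  rw [norm_add_sq_real, norm_sub_sq_real, norm_smul, norm_smul, real_inner_smul_left,
    real_inner_smul_right, Real.norm_eq_abs, Real.norm_eq_abs, mul_pow, mul_pow, sq_abs, sq_abs,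
    smul_eq_mul, smul_eq_mul]
  ring

theorem StrongConvexOn.add_sq_norm_sub_le_of_isMinOn {m : ℝ} {h : E → ℝ} {p y : E}
    (hh : StrongConvexOn s m h) (hmin : IsMinOn h s p) (hp : p ∈ s) (hy : y ∈ s) :
    h p + m / 2 * ‖y - p‖ ^ 2 ≤ h y := by
  have hseg : ∀ t ∈ Ioc (0 : ℝ) 1, h p + (1 - t) * (m / 2 * ‖y - p‖ ^ 2) ≤ h y := by
    rintro t ⟨ht0, ht1⟩
    have hconv := hh.2 hp hy (sub_nonneg.2 ht1) ht0.le (sub_add_cancel 1 t)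
    have hle : h p ≤ h ((1 - t) • p + t • y) :=
      hmin (hh.1 hp hy (sub_nonneg.2 ht1) ht0.le (sub_add_cancel 1 t))
    rw [norm_sub_rev] at hconv
    simp only [smul_eq_mul] at hconv
    have : t * (h p + (1 - t) * (m / 2 * ‖y - p‖ ^ 2)) ≤ t * h y := by nlinarith
    exact le_of_mul_le_mul_left this ht0
  have hlim : Tendsto (fun t : ℝ => h p + (1 - t) * (m / 2 * ‖y - p‖ ^ 2)) (𝓝[>] 0)
      (𝓝 (h p + (1 - 0) * (m / 2 * ‖y - p‖ ^ 2))) :=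
    ((continuous_const.add ((continuous_const.sub continuous_id).mul continuous_const)).tendsto
      0).mono_left nhdsWithin_le_nhds
  have hev : ∀ᶠ t in 𝓝[>] (0 : ℝ), h p + (1 - t) * (m / 2 * ‖y - p‖ ^ 2) ≤ h y := by
    filter_upwards [Ioc_mem_nhdsGT zero_lt_one] with t ht using hseg t ht
  simpa using le_of_tendsto hlim hev

end StrongConvexity

section ExtendedReal

variable {E : Type*} {g : E → EReal}

theorem EReal.convexOn_toReal [AddCommGroup E] [Module ℝ E] (hg : ∀ x, g x ≠ ⊥)
    (hconv : ∀ x y : E, ∀ a b : ℝ, 0 ≤ a → 0 ≤ b → a + b = 1 →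
      g (a • x + b • y) ≤ (a : EReal) * g x + (b : EReal) * g y) :
    ConvexOn ℝ {x | g x ≠ ⊤} fun x => (g x).toReal := by
  have hcomb : ∀ x, g x ≠ ⊤ → ∀ y, g y ≠ ⊤ → ∀ a b : ℝ, 0 ≤ a → 0 ≤ b → a + b = 1 →
      g (a • x + b • y) ≤ ((a * (g x).toReal + b * (g y).toReal : ℝ) : EReal) := by
    intro x hx y hy a b ha hb hab
    rw [EReal.coe_add, EReal.coe_mul, EReal.coe_mul, EReal.coe_toReal hx (hg x),
      EReal.coe_toReal hy (hg y)]
    exact hconv x y a b ha hb hab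
  have hdom : Convex ℝ {x | g x ≠ ⊤} := fun x hx y hy a b ha hb hab =>
    ne_top_of_le_ne_top (EReal.coe_ne_top _) (hcomb x hx y hy a b ha hb hab)
  refine ⟨hdom, fun x hx y hy a b ha hb hab => ?_⟩
  have h := hcomb x hx y hy a b ha hb hab
  rwa [← EReal.coe_toReal (hdom hx hy ha hb hab) (hg _), EReal.coe_le_coe_iff] at h

theorem EReal.ne_top_of_forall_add_coe_le {φ : E → ℝ} {p y : E}
    (hp : ∀ z, g p + φ p ≤ g z + φ z) (hy : g y ≠ ⊤) : g p ≠ ⊤ := by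
  intro hpt
  have h := (hp y).trans_lt (EReal.add_lt_top hy (EReal.coe_ne_top _))
  rw [hpt, EReal.top_add_coe] at h
  exact lt_irrefl _ h

theorem EReal.isMinOn_toReal_add_of_forall_add_coe_le (hg : ∀ x, g x ≠ ⊥) {φ : E → ℝ} {p : E}
    (hp : ∀ z, g p + φ p ≤ g z + φ z) (hpt : g p ≠ ⊤) :
    IsMinOn (fun z => (g z).toReal + φ z) {z | g z ≠ ⊤} p := fun z hz => by
  have h := hp z
  rwa [← EReal.coe_toReal hpt (hg p), ← EReal.coe_toReal hz (hg z), ← EReal.coe_add,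
    ← EReal.coe_add, EReal.coe_le_coe_iff] at h

end ExtendedReal

theorem succ_mul_sub_le_of_antitone_of_le_add_sub {a d : ℕ → ℝ} {b : ℝ}
    (hanti : ∀ k, a (k + 2) ≤ a (k + 1)) (hstep : ∀ k, a (k + 1) ≤ b + (d k - d (k + 1)))
    (hd : ∀ k, 0 ≤ d k) (k : ℕ) :
    (k + 1) * (a (k + 1) - b) ≤ d 0 := by
  suffices h : (k + 1) * (a (k + 1) - b) + d (k + 1) ≤ d 0 by linarith [hd (k + 1)]
  induction k with
  | zero =>
    simp only [Nat.cast_zero, zero_add, one_mul]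
    linarith [hstep 0]
  | succ k ih =>
    push_cast
    nlinarith [hanti k, hstep (k + 1), (k.cast_nonneg : (0 : ℝ) ≤ k)]

section ProximalGradient

variable {E : Type*} [NormedAddCommGroup E] [InnerProductSpace ℝ E] [CompleteSpace E]
  {f : E → ℝ} {f' : E → E} {L : ℝ} {s : Set E} {G : E → ℝ}

theorem proximal_gradient_step_le (hL : L ≠ 0) (hf : ConvexOn ℝ univ f)
    (hf' : ∀ x, HasGradientAt f (f' x) x) (hlip : ∀ x y, ‖f' x - f' y‖ ≤ L * ‖x - y‖)
    (hG : ConvexOn ℝ s G) {x p y : E} (hp : p ∈ s)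
    (hmin : IsMinOn (fun z => G z + L / 2 * ‖z - (x - (1 / L) • f' x)‖ ^ 2) s p) (hy : y ∈ s) :
    f p + G p ≤ f y + G y + L / 2 * (‖x - y‖ ^ 2 - ‖p - y‖ ^ 2) := by
  have hexpand : ∀ z, L / 2 * ‖z - (x - (1 / L) • f' x)‖ ^ 2
      = L / 2 * ‖z - x‖ ^ 2 + ⟪f' x, z - x⟫ + ‖f' x‖ ^ 2 / (2 * L) := by
    intro z
    rw [show z - (x - (1 / L) • f' x) = (z - x) + (1 / L) • f' x by module, norm_add_sq_real,
      real_inner_smul_right, norm_smul, mul_pow, Real.norm_eq_abs, sq_abs, real_inner_comm]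
    field_simp
  have hthree := (hG.add_strongConvexOn (strongConvexOn_mul_norm_sub_sq hG.1 (L / 2)
    (x - (1 / L) • f' x))).add_sq_norm_sub_le_of_isMinOn hmin hp hy
  have hdescent := le_add_inner_gradient_add_sq hf' hlip x p
  have hgradient := hf.add_inner_gradient_le hf' x y
  simp only [Pi.add_apply, hexpand] at hthree
  rw [norm_sub_rev x y, norm_sub_rev p y]
  linarith

theorem proximal_gradient_rate (hL : 0 < L) (hf : ConvexOn ℝ univ f)
    (hf' : ∀ x, HasGradientAt f (f' x) x) (hlip : ∀ x y, ‖f' x - f' y‖ ≤ L * ‖x - y‖)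
    (hG : ConvexOn ℝ s G) {x : ℕ → E} (hmem : ∀ k, x (k + 1) ∈ s)
    (hmin : ∀ k,
      IsMinOn (fun z => G z + L / 2 * ‖z - (x k - (1 / L) • f' (x k))‖ ^ 2) s (x (k + 1)))
    {y : E} (hy : y ∈ s) (k : ℕ) :
    (k + 1) * (f (x (k + 1)) + G (x (k + 1)) - (f y + G y)) ≤ L / 2 * ‖x 0 - y‖ ^ 2 := by
  have hstep : ∀ k, ∀ z ∈ s, f (x (k + 1)) + G (x (k + 1))
      ≤ f z + G z + L / 2 * (‖x k - z‖ ^ 2 - ‖x (k + 1) - z‖ ^ 2) := fun k _ hz =>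
    proximal_gradient_step_le hL.ne' hf hf' hlip hG (hmem k) (hmin k) hz
  refine succ_mul_sub_le_of_antitone_of_le_add_sub (a := fun k => f (x k) + G (x k))
    (d := fun k => L / 2 * ‖x k - y‖ ^ 2) (fun k => ?_) (fun k => ?_) (fun k => by positivity) k
  · have hdecrease := hstep (k + 1) (x (k + 1)) (hmem k)
    rw [sub_self, norm_zero] at hdecrease
    nlinarith [sq_nonneg ‖x (k + 1 + 1) - x (k + 1)‖]
  · linarith [hstep k y hy]

end ProximalGradient

theorem proximal_gradient_sublinear_rate_general {n : ℕ} (L : ℝ) (hL : 0 < L)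
    (f : EuclideanSpace ℝ (Fin n) → ℝ) (f' : EuclideanSpace ℝ (Fin n) → EuclideanSpace ℝ (Fin n))
    (hfconv : ConvexOn ℝ Set.univ f)
    (hfdiff : ∀ x, HasGradientAt f (f' x) x)
    (hflip : ∀ x y, ‖f' x - f' y‖ ≤ L * ‖x - y‖)
    (g : EuclideanSpace ℝ (Fin n) → EReal)
    (hg_ne_bot : ∀ x, g x ≠ ⊥)
    (hg_convex : ∀ x y : EuclideanSpace ℝ (Fin n), ∀ a b : ℝ, 0 ≤ a → 0 ≤ b → a + b = 1 →
      g (a • x + b • y) ≤ (a : EReal) * g x + (b : EReal) * g y)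
    (x : ℕ → EuclideanSpace ℝ (Fin n))
    (hupdate : ∀ k : ℕ, ∀ y : EuclideanSpace ℝ (Fin n),
      g (x (k+1)) + (((L/2) * ‖x (k+1) - (x k - (1/L) • f' (x k))‖^2 : ℝ) : EReal) ≤
        g y + (((L/2) * ‖y - (x k - (1/L) • f' (x k))‖^2 : ℝ) : EReal))
    (xs : EuclideanSpace ℝ (Fin n)) :
    ∀ k : ℕ, 1 ≤ k →
      (f (x k) : EReal) + g (x k) ≤
        (f xs : EReal) + g xs + ((L * ‖x 0 - xs‖^2 / (2 * k) : ℝ) : EReal) := by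
  intro k hk
  obtain ⟨j, rfl⟩ := Nat.exists_eq_add_of_le' hk
  by_cases hxs : g xs = ⊤
  · simp [hxs]
  have hmem : ∀ k, g (x (k + 1)) ≠ ⊤ := fun k =>
    EReal.ne_top_of_forall_add_coe_le
      (φ := fun z => L / 2 * ‖z - (x k - (1 / L) • f' (x k))‖ ^ 2) (hupdate k) hxs
  have hrate := proximal_gradient_rate hL hfconv hfdiff hflip
    (EReal.convexOn_toReal hg_ne_bot hg_convex) hmem
    (fun k => EReal.isMinOn_toReal_add_of_forall_add_coe_le hg_ne_bot
      (φ := fun z => L / 2 * ‖z - (x k - (1 / L) • f' (x k))‖ ^ 2) (hupdate k) (hmem k)) hxs j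
  rw [← EReal.coe_toReal (hmem j) (hg_ne_bot _), ← EReal.coe_toReal hxs (hg_ne_bot _)]
  norm_cast
  have hgap : f (x (j + 1)) + (g (x (j + 1))).toReal - (f xs + (g xs).toReal)
      ≤ L * ‖x 0 - xs‖ ^ 2 / ((2 * (j + 1) : ℕ) : ℝ) := by
    rw [le_div_iff₀ (by positivity)]
    push_cast
    linarith
  linarith

/-- sublinear `O(1/k)` rate of the proximal gradient method for
`F = f + g` with `f` convex with `L`-Lipschitz gradient and `g` proper closed convex
(extended-real-valued), given a minimizer `x*`:
`F(x^k) − F(x*) ≤ L‖x⁰ − x*‖²/(2k)` for all `k ≥ 1`. -/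
theorem proximal_gradient_sublinear_rate {n : ℕ} (L : ℝ) (hL : 0 < L)
    (f : EuclideanSpace ℝ (Fin n) → ℝ) (f' : EuclideanSpace ℝ (Fin n) → EuclideanSpace ℝ (Fin n))
    (hfconv : ConvexOn ℝ Set.univ f)
    (hfdiff : ∀ x, HasGradientAt f (f' x) x)
    (hflip : ∀ x y, ‖f' x - f' y‖ ≤ L * ‖x - y‖)
    (g : EuclideanSpace ℝ (Fin n) → EReal)
    (hg_ne_bot : ∀ x, g x ≠ ⊥)
    (hg_proper : ∃ x, g x ≠ ⊤)
    (hg_closed : LowerSemicontinuous g)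
    (hg_convex : ∀ x y : EuclideanSpace ℝ (Fin n), ∀ a b : ℝ, 0 ≤ a → 0 ≤ b → a + b = 1 →
      g (a • x + b • y) ≤ (a : EReal) * g x + (b : EReal) * g y)
    (x : ℕ → EuclideanSpace ℝ (Fin n))
    (hupdate : ∀ k : ℕ, ∀ y : EuclideanSpace ℝ (Fin n),
      g (x (k+1)) + (((L/2) * ‖x (k+1) - (x k - (1/L) • f' (x k))‖^2 : ℝ) : EReal) ≤
        g y + (((L/2) * ‖y - (x k - (1/L) • f' (x k))‖^2 : ℝ) : EReal))
    (xs : EuclideanSpace ℝ (Fin n))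
    (hmin : ∀ y, (f xs : EReal) + g xs ≤ (f y : EReal) + g y) :
    ∀ k : ℕ, 1 ≤ k →
      (f (x k) : EReal) + g (x k) ≤
        (f xs : EReal) + g xs + ((L * ‖x 0 - xs‖^2 / (2 * k) : ℝ) : EReal) :=
  proximal_gradient_sublinear_rate_general L hL f f' hfconv hfdiff hflip g hg_ne_bot hg_convex x
    hupdate xs
end
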